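/- Let n be a positive integer, let m be an index with 0 ≤ m ≤ n-1, and let D be a set of pairs (a,b) of indices in {0, …, n-1} with b < m < a. Let H be the directed graph on {0, …, n-1} with edges k → k+1 for all k < n-1 and an edge a → b for every (a,b) ∈ D. Suppose v ≤ u are indices and there is a walk in H from u to v all of whose vertices are at least v. Then there is a walk in H from u to v, all of whose vertices are at least v, that uses at most two edges of D; moreover, either v = u and no D-edge is used, or exactly one D-edge (a,v) with u ≤ a is used, or exactly two D-edges are used, first a₁ → b₁ and then a₂ → b₂, with b₂ = v, u ≤ a₁, and b₂ < b₁ < a₂ < a₁ (i.e., the two detours cross). -/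

import Mathlib

/-!
Successor edges only go up, so the last edge of the given walk, entering `v` from a vertex
`≥ v`, is a detour `(a₂, v)`, and to get below `u` the walk must take a detour `(a₁, b₁)` with
`u ≤ a₁` and `v ≤ b₁`. If some detour `(a, v)` starts at or above `u`, climb from `u` to `a` and
jump. Otherwise `v < b₁` and `a₂ < u ≤ a₁`: climb from `u` to `a₁`, jump to `b₁`, climb to `a₂`
(possible since `b₁ < m < a₂`) and jump to `v`.
-/

/-- A walk in the directed graph with edge relation `E`: a nonempty list of vertices
starting at `u`, ending at `v`, with every consecutive pair an edge. -/
def IsWalk {V : Type*} (E : V → V → Prop) (l : List V) (u v : V) : Prop :=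
  l ≠ [] ∧ l.head? = some u ∧ l.getLast? = some v ∧ l.Chain' E

namespace List

variable {α : Type*}

theorem consecutivePairs_append {l₁ l₂ : List α} {a b : α}
    (ha : l₁.getLast? = some a) (hb : l₂.head? = some b) :
    (l₁ ++ l₂).consecutivePairs = l₁.consecutivePairs ++ (a, b) :: l₂.consecutivePairs := by
  obtain ⟨t, rfl⟩ := head?_eq_some_iff.mp hb
  induction l₁ with
  | nil => simp at ha
  | cons x r ih =>
    cases r with
    | nil => cases Option.some.inj ha; rfl
    | cons y r =>
      rw [getLast?_cons_cons] at ha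
      simpa [consecutivePairs] using ih ha

theorem IsChain.rel_of_mem_consecutivePairs {R : α → α → Prop} {l : List α} (h : l.IsChain R)
    {p : α × α} (hp : p ∈ l.consecutivePairs) : R p.1 p.2 := by
  induction h with
  | nil | singleton => cases hp
  | cons_cons hab _ ih =>
    rcases mem_cons.mp hp with rfl | hp
    exacts [hab, ih hp]

end List

section Walk

variable {V : Type*} {E : V → V → Prop} {l l₁ l₂ : List V} {u v w w' : V}

theorem IsWalk.append (h₁ : IsWalk E l₁ u w) (h₂ : IsWalk E l₂ w' v) (h : E w w') :
    IsWalk E (l₁ ++ l₂) u v := by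
  obtain ⟨hne₁, hu, hw, hc₁⟩ := h₁
  obtain ⟨hne₂, hw', hv, hc₂⟩ := h₂
  refine ⟨by simp [hne₁], ?_, ?_, hc₁.append hc₂ ?_⟩
  · rwa [List.head?_append_of_ne_nil _ hne₁]
  · rwa [List.getLast?_append_of_ne_nil _ hne₂]
  · simp_all

theorem IsWalk.exists_mem_rel_of_ne (h : IsWalk E l u v) (huv : u ≠ v) : ∃ x ∈ l, E x v := by
  obtain ⟨-, hu, hv, hc⟩ := h
  obtain ⟨l', rfl⟩ := List.getLast?_eq_some_iff.mp hv
  obtain ⟨x, hx⟩ : ∃ x, l'.getLast? = some x := by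
    rw [← Option.isSome_iff_exists, List.getLast?_isSome]
    rintro rfl
    simp_all
  refine ⟨x, List.mem_append_left _ (List.mem_of_getLast? hx), ?_⟩
  exact (List.isChain_append.mp hc).2.2 x hx v rfl

theorem isWalk_range' {E : ℕ → ℕ → Prop} {s t : ℕ} (hst : s ≤ t)
    (hE : ∀ k, s ≤ k → k < t → E k (k + 1)) :
    IsWalk E (List.range' s (t - s + 1)) s t := by
  refine ⟨by simp, by simp [List.head?_range'], by simp [List.getLast?_range']; omega, ?_⟩
  refine (List.isChain_range' s _ 1).imp_of_mem_imp fun a b ha hb hab => ?_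
  simp only [List.mem_range'_1] at ha hb
  subst hab
  exact hE a ha.1 (by omega)

end Walk

def succDetourRel (n : ℕ) (D : Finset (ℕ × ℕ)) (a c : ℕ) : Prop :=
  (a + 1 < n ∧ c = a + 1) ∨ (a, c) ∈ D

section SuccDetour

variable {n : ℕ} {D : Finset (ℕ × ℕ)} {l : List ℕ} {u v : ℕ}

theorem IsWalk.exists_detour_of_lt (h : IsWalk (succDetourRel n D) l u v) (hvu : v < u) :
    ∃ a b, (a, b) ∈ D ∧ u ≤ a ∧ b ∈ l := by
  induction l generalizing u with
  | nil => exact absurd rfl h.1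
  | cons x t ih =>
    obtain ⟨-, hu, hv, hc⟩ := h
    cases Option.some.inj hu
    cases t with
    | nil =>
      simp only [List.getLast?_singleton, Option.some.injEq] at hv
      omega
    | cons y t =>
      obtain ⟨hxy, hc⟩ := List.isChain_cons_cons.mp hc
      rcases hxy with ⟨-, rfl⟩ | hxy
      · obtain ⟨a, b, hab, hua, hb⟩ :=
          ih ⟨List.cons_ne_nil _ _, rfl, by simpa using hv, hc⟩ (by omega)
        exact ⟨a, b, hab, by omega, List.mem_cons_of_mem _ hb⟩
      · exact ⟨_, y, hxy, le_rfl, by simp⟩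

theorem IsWalk.exists_detour_to (h : IsWalk (succDetourRel n D) l u v) (huv : u ≠ v)
    (hge : ∀ x ∈ l, v ≤ x) : ∃ a, (a, v) ∈ D := by
  obtain ⟨x, hx, ⟨-, rfl⟩ | hxv⟩ := h.exists_mem_rel_of_ne huv
  · have := hge x hx; omega
  · exact ⟨x, hxv⟩

theorem isWalk_succDetourRel_range' {s t : ℕ} (hst : s ≤ t) (ht : t < n) :
    IsWalk (succDetourRel n D) (List.range' s (t - s + 1)) s t :=
  isWalk_range' hst fun _ _ hk => Or.inl ⟨by omega, rfl⟩

theorem IsWalk.append_detour_range' {W : List ℕ} {a b t : ℕ}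
    (hW : IsWalk (succDetourRel n D) W u a) (hab : (a, b) ∈ D) (hbt : b ≤ t) (ht : t < n) :
    IsWalk (succDetourRel n D) (W ++ List.range' b (t - b + 1)) u t :=
  hW.append (isWalk_succDetourRel_range' hbt ht) (Or.inr hab)

theorem filter_mem_consecutivePairs_range' (hD : ∀ q ∈ D, q.2 ≤ q.1) (s k : ℕ) :
    (List.range' s k).consecutivePairs.filter (· ∈ D) = [] := by
  refine List.filter_eq_nil_iff.mpr fun p hp hpD => ?_
  have hsucc : p.2 = p.1 + 1 := (List.isChain_range' s k 1).rel_of_mem_consecutivePairs hp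
  have := hD p (by simpa using hpD)
  omega

theorem IsWalk.filter_mem_consecutivePairs_append_range' {E : ℕ → ℕ → Prop} {W : List ℕ}
    {a b : ℕ} (hW : IsWalk E W u a) (hab : (a, b) ∈ D) (hD : ∀ q ∈ D, q.2 ≤ q.1) (k : ℕ) :
    (W ++ List.range' b (k + 1)).consecutivePairs.filter (· ∈ D) =
      W.consecutivePairs.filter (· ∈ D) ++ [(a, b)] := by
  rw [List.consecutivePairs_append hW.2.2.1 (b := b) (by simp [List.head?_range']),
    List.filter_append, List.filter_cons_of_pos (by simpa using hab),
    filter_mem_consecutivePairs_range' hD]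

theorem exists_walk_one_detour (hD : ∀ q ∈ D, q.2 ≤ q.1) {a : ℕ} (ha : (a, v) ∈ D)
    (hvu : v ≤ u) (hua : u ≤ a) (han : a < n) :
    ∃ l, IsWalk (succDetourRel n D) l u v ∧ (∀ x ∈ l, v ≤ x) ∧
      l.consecutivePairs.filter (· ∈ D) = [(a, v)] := by
  have hclimb := isWalk_succDetourRel_range' (D := D) hua han
  refine ⟨_, hclimb.append_detour_range' ha le_rfl (by omega), ?_, ?_⟩
  · simp only [List.mem_append, List.mem_range'_1]
    omega
  · rw [hclimb.filter_mem_consecutivePairs_append_range' ha hD,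
      filter_mem_consecutivePairs_range' hD]
    rfl

theorem exists_walk_two_detours (hD : ∀ q ∈ D, q.2 ≤ q.1) {a₁ b₁ a₂ : ℕ}
    (h₁ : (a₁, b₁) ∈ D) (h₂ : (a₂, v) ∈ D) (hvb₁ : v ≤ b₁) (hb₁a₂ : b₁ ≤ a₂) (hvu : v ≤ u)
    (hua₁ : u ≤ a₁) (ha₁n : a₁ < n) (ha₂n : a₂ < n) :
    ∃ l, IsWalk (succDetourRel n D) l u v ∧ (∀ x ∈ l, v ≤ x) ∧
      l.consecutivePairs.filter (· ∈ D) = [(a₁, b₁), (a₂, v)] := by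
  have hclimb := isWalk_succDetourRel_range' (D := D) hua₁ ha₁n
  have hclimb₂ := hclimb.append_detour_range' h₁ hb₁a₂ ha₂n
  refine ⟨_, hclimb₂.append_detour_range' h₂ le_rfl (by omega), ?_, ?_⟩
  · simp only [List.mem_append, List.mem_range'_1]
    omega
  · rw [hclimb₂.filter_mem_consecutivePairs_append_range' h₂ hD,
      hclimb.filter_mem_consecutivePairs_append_range' h₁ hD,
      filter_mem_consecutivePairs_range' hD]
    rfl

end SuccDetour

theorem stmt_10_general (n : ℕ) (m : ℕ)
    (D : Finset (ℕ × ℕ)) (hD : ∀ q ∈ D, q.2 < m ∧ m < q.1 ∧ q.1 < n) :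
    let H : ℕ → ℕ → Prop := fun a c => (a + 1 < n ∧ c = a + 1) ∨ (a, c) ∈ D
    ∀ u v : ℕ, v ≤ u → u < n →
      (∃ l, IsWalk H l u v ∧ ∀ x ∈ l, v ≤ x) →
      ∃ l, IsWalk H l u v ∧ (∀ x ∈ l, v ≤ x) ∧
        ((v = u ∧ (l.zip l.tail).filter (fun q => decide (q ∈ D)) = []) ∨
         (∃ a, u ≤ a ∧ (a, v) ∈ D ∧
           (l.zip l.tail).filter (fun q => decide (q ∈ D)) = [(a, v)]) ∨
         (∃ a₁ b₁ a₂ b₂, (a₁, b₁) ∈ D ∧ (a₂, b₂) ∈ D ∧ b₂ = v ∧ u ≤ a₁ ∧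
           b₂ < b₁ ∧ b₁ < a₂ ∧ a₂ < a₁ ∧
           (l.zip l.tail).filter (fun q => decide (q ∈ D)) = [(a₁, b₁), (a₂, b₂)])) := by
  intro H u v hvu _ ⟨l, hl, hge⟩
  have hDdesc : ∀ q ∈ D, q.2 ≤ q.1 := fun q hq => by have := hD q hq; omega
  rcases hvu.eq_or_lt with rfl | hvu
  · exact ⟨[v], ⟨by simp, rfl, rfl, .singleton v⟩, by simp, Or.inl ⟨rfl, rfl⟩⟩
  obtain ⟨a₂, h₂⟩ := hl.exists_detour_to hvu.ne' hge
  obtain ⟨a₁, b₁, h₁, hua₁, hb₁⟩ := hl.exists_detour_of_lt hvu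
  by_cases hone : ∃ a, u ≤ a ∧ (a, v) ∈ D
  · obtain ⟨a, hua, ha⟩ := hone
    obtain ⟨l', hl', hge', hdetours⟩ :=
      exists_walk_one_detour hDdesc ha hvu.le hua (hD _ ha).2.2
    exact ⟨l', hl', hge', Or.inr (Or.inl ⟨a, hua, ha, hdetours⟩)⟩
  have hvb₁ : v < b₁ := (hge b₁ hb₁).lt_of_ne fun hb => hone ⟨a₁, hua₁, hb ▸ h₁⟩
  have ha₂u : a₂ < u := lt_of_not_ge fun h => hone ⟨a₂, h, h₂⟩
  have hb₁a₂ : b₁ < a₂ := (hD _ h₁).1.trans (hD _ h₂).2.1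
  obtain ⟨l', hl', hge', hdetours⟩ := exists_walk_two_detours hDdesc h₁ h₂ hvb₁.le hb₁a₂.le
    hvu.le hua₁ (hD _ h₁).2.2 (hD _ h₂).2.2
  exact ⟨l', hl', hge', Or.inr (Or.inr
    ⟨a₁, b₁, a₂, v, h₁, h₂, rfl, hua₁, hvb₁, hb₁a₂, ha₂u.trans_le hua₁, hdetours⟩)⟩

/-- In the graph `H` on `{0,…,n-1}` with successor edges and detour edges
`D` (each detour `(a,b)` having `b < m < a`), any walk from `u` to `v ≤ u` staying at
vertices `≥ v` can be replaced by one using at most two detour edges, with the stated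
case structure (no detour and `v = u`; one detour `(a,v)` with `u ≤ a`; or two crossing
detours, the second ending at `v`). -/
theorem stmt_10 (n : ℕ) (hn : 0 < n) (m : ℕ) (hm : m ≤ n - 1)
    (D : Finset (ℕ × ℕ)) (hD : ∀ q ∈ D, q.2 < m ∧ m < q.1 ∧ q.1 < n) :
    let H : ℕ → ℕ → Prop := fun a c => (a + 1 < n ∧ c = a + 1) ∨ (a, c) ∈ D
    ∀ u v : ℕ, v ≤ u → u < n →
      (∃ l, IsWalk H l u v ∧ ∀ x ∈ l, v ≤ x) →
      ∃ l, IsWalk H l u v ∧ (∀ x ∈ l, v ≤ x) ∧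
        ((v = u ∧ (l.zip l.tail).filter (fun q => decide (q ∈ D)) = []) ∨
         (∃ a, u ≤ a ∧ (a, v) ∈ D ∧
           (l.zip l.tail).filter (fun q => decide (q ∈ D)) = [(a, v)]) ∨
         (∃ a₁ b₁ a₂ b₂, (a₁, b₁) ∈ D ∧ (a₂, b₂) ∈ D ∧ b₂ = v ∧ u ≤ a₁ ∧
           b₂ < b₁ ∧ b₁ < a₂ ∧ a₂ < a₁ ∧
           (l.zip l.tail).filter (fun q => decide (q ∈ D)) = [(a₁, b₁), (a₂, b₂)])) :=
  stmt_10_general n m D hD
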